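/- arXiv:1206.4203 — 4 statements merged into one kernel-verified Lean document; each statement's English description precedes it below -/
import Mathlib

section
/- For every integer D ≥ 2 and all natural numbers p_1, …, p_D, the number of rooted line-colored D-ary trees having exactly p_i edges of color i for each i = 1, …, D equals (1/(p_1 + ⋯ + p_D + 1)) · ∏_{j=1}^{D} binom(p_1 + ⋯ + p_D + 1, p_j). In particular, the set of such trees is finite. -/
/-- A rooted line-colored `D`-ary tree, encoded by its (finite) set of vertices,
each vertex being identified with the sequence of edge colors on the path from
the root to it.  The set contains the root (empty word) and is closed under
taking prefixes.  This encoding automatically enforces that every vertex has at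
most `D` children and that the edges to the children of a vertex carry pairwise
distinct colors. -/
structure ColoredTree (D : ℕ) where
  verts : Finset (List (Fin D))
  root_mem : [] ∈ verts
  prefix_closed : ∀ w ∈ verts, ∀ v : List (Fin D), v <+: w → v ∈ verts

/-- The number of edges of color `i` in the tree: every non-root vertex is the lower
endpoint of exactly one edge, whose color is the last letter of the vertex's word. -/
def edgeCount {D : ℕ} (i : Fin D) (t : ColoredTree D) : ℕ :=
  (t.verts.filter fun w => w.getLast? = some i).card

/-! Count ordered forests of `k` trees whose color profile is `p`; with `n = ∑ p`, the theorem
is the case `k = 1` of `(n + k) · F(k, p) = k · ∏ⱼ C(n + k, pⱼ)`. Deleting the root of the first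
tree, whose child colors form a set `A`, turns a forest of `k + 1` trees into a forest of
`|A| + k` trees with profile `p - 𝟙_A`, so `F(k + 1, p) = ∑_A F(|A| + k, p - 𝟙_A)`, and the same
decomposition gives finiteness. Each term on the right has `n + k` one less than the left, so by
induction on `n + k` the formula reduces to expanding, with `M = n + k`,
`∏ⱼ C(M + 1, pⱼ) = ∏ⱼ (C(M, pⱼ - 1) + C(M, pⱼ))` over subsets `A` of the colors, plain and
weighted by `|A|`, using `(M + 1) C(M, q - 1) = q C(M + 1, q)`. -/

open Finset

theorem Finset.mul_sum_powerset_card_mul_prod_add {ι R : Type*} [DecidableEq ι] [CommSemiring R]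
    (S : Finset ι) {a b p : ι → R} {c : R}
    (h : ∀ j ∈ S, c * a j = p j * (a j + b j)) :
    c * ∑ A ∈ S.powerset, (A.card : R) * ((∏ j ∈ A, a j) * ∏ j ∈ S \ A, b j) =
      (∑ j ∈ S, p j) * ∏ j ∈ S, (a j + b j) := by
  induction S using Finset.induction_on with
  | empty => simp
  | insert i S hi ih =>
    set W : Finset ι → R := fun A => (∏ j ∈ A, a j) * ∏ j ∈ S \ A, b j
    have hW₁ : ∀ A ∈ S.powerset,
        (A.card : R) * ((∏ j ∈ A, a j) * ∏ j ∈ insert i S \ A, b j) = b i * (A.card * W A) :=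
      fun A hA => by
        rw [insert_sdiff_of_notMem _ fun hiA => hi (mem_powerset.mp hA hiA),
          prod_insert (by simp [hi])]
        ring
    have hW₂ : ∀ A ∈ S.powerset, ((insert i A).card : R) *
        ((∏ j ∈ insert i A, a j) * ∏ j ∈ insert i S \ insert i A, b j) =
          a i * (A.card * W A) + a i * W A := fun A hA => by
      have hiA : i ∉ A := fun hiA => hi (mem_powerset.mp hA hiA)
      rw [card_insert_of_notMem hiA, prod_insert hiA, insert_sdiff_insert,
        sdiff_insert_of_notMem hi]
      push_cast
      ring
    rw [sum_powerset_insert hi, sum_congr rfl hW₁, sum_congr rfl hW₂, sum_add_distrib,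
      ← mul_sum, ← mul_sum, ← mul_sum, ← prod_add, sum_insert hi, prod_insert hi]
    calc _ = (a i + b i) * (c * ∑ A ∈ S.powerset, (A.card : R) * W A) +
          c * a i * ∏ j ∈ S, (a j + b j) := by ring
      _ = _ := by
        rw [ih fun j hj => h j (mem_insert_of_mem hj), h i (mem_insert_self i S)]
        ring

namespace ColoredTree

variable {D : ℕ}

theorem ext {s t : ColoredTree D} (h : ∀ w, w ∈ s.verts ↔ w ∈ t.verts) : s = t := by
  obtain ⟨s, _, _⟩ := s
  obtain ⟨t, _, _⟩ := t
  simpa [Finset.ext_iff] using h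

def rootChildren (t : ColoredTree D) : Finset (Fin D) :=
  univ.filter fun i => [i] ∈ t.verts

@[simp]
theorem mem_rootChildren {t : ColoredTree D} {i : Fin D} : i ∈ t.rootChildren ↔ [i] ∈ t.verts := by
  simp [rootChildren]

noncomputable def subtree (i : Fin D) (t : ColoredTree D) : ColoredTree D where
  verts := insert [] (t.verts.preimage (List.cons i) List.cons_injective.injOn)
  root_mem := mem_insert_self _ _
  prefix_closed w hw v hv := by
    simp only [mem_insert, mem_preimage] at hw ⊢
    rcases hw with rfl | hw
    · exact .inl (List.prefix_nil.mp hv)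
    · exact .inr (t.prefix_closed _ hw _ (List.cons_prefix_cons.mpr ⟨rfl, hv⟩))

@[simp]
theorem mem_subtree_verts {i : Fin D} {t : ColoredTree D} {w : List (Fin D)} :
    w ∈ (t.subtree i).verts ↔ w = [] ∨ i :: w ∈ t.verts := by
  simp [subtree]

def graft (A : Finset (Fin D)) (g : A → ColoredTree D) : ColoredTree D where
  verts := insert [] (univ.biUnion fun i : A => (g i).verts.map ⟨List.cons i, List.cons_injective⟩)
  root_mem := mem_insert_self _ _
  prefix_closed w hw v hv := by
    simp only [mem_insert, mem_biUnion, mem_univ, true_and, mem_map,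
      Function.Embedding.coeFn_mk] at hw ⊢
    rcases hw with rfl | ⟨i, u, hu, rfl⟩
    · exact .inl (List.prefix_nil.mp hv)
    · rcases v with _ | ⟨a, v⟩
      · exact .inl rfl
      · obtain ⟨rfl, hvu⟩ := List.cons_prefix_cons.mp hv
        exact .inr ⟨i, v, (g i).prefix_closed u hu v hvu, rfl⟩

@[simp]
theorem cons_mem_graft_verts {A : Finset (Fin D)} {g : A → ColoredTree D} {i : Fin D}
    {u : List (Fin D)} : i :: u ∈ (graft A g).verts ↔ ∃ h : i ∈ A, u ∈ (g ⟨i, h⟩).verts := by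
  simp [graft]

theorem rootChildren_graft (A : Finset (Fin D)) (g : A → ColoredTree D) :
    (graft A g).rootChildren = A := by
  ext i
  simp [root_mem]

theorem subtree_graft {A : Finset (Fin D)} (g : A → ColoredTree D) (i : A) :
    (graft A g).subtree i = g i := by
  refine ext fun w => ?_
  simp only [mem_subtree_verts, cons_mem_graft_verts, Subtype.coe_eta, exists_prop, i.2, true_and]
  exact ⟨fun h => h.elim (· ▸ (g i).root_mem) id, .inr⟩

theorem graft_subtree {t : ColoredTree D} {A : Finset (Fin D)} (h : t.rootChildren = A) :
    graft A (fun i => t.subtree i) = t := by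
  subst h
  refine ext fun w => ?_
  rcases w with _ | ⟨i, u⟩
  · simp [root_mem]
  · simp only [cons_mem_graft_verts, mem_rootChildren, mem_subtree_verts, exists_prop]
    refine ⟨fun ⟨hi, hu⟩ => hu.elim (· ▸ hi) id, fun hu => ⟨?_, .inr hu⟩⟩
    exact t.prefix_closed _ hu [i] (List.cons_prefix_cons.mpr ⟨rfl, List.nil_prefix⟩)

theorem card_filter_graft_verts (A : Finset (Fin D)) (g : A → ColoredTree D)
    (P : List (Fin D) → Prop) [DecidablePred P] (hP : ¬ P []) :
    ((graft A g).verts.filter P).card = ∑ i : A, ((g i).verts.filter fun u => P (i :: u)).card := by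
  rw [graft, filter_insert, if_neg hP, filter_biUnion, card_biUnion]
  · simp [filter_map]
  · intro i _ j _ hij
    simp only [disjoint_left, mem_filter, mem_map, Function.Embedding.coeFn_mk]
    rintro _ ⟨⟨u, -, rfl⟩, -⟩ ⟨⟨v, -, h⟩, -⟩
    exact hij (Subtype.ext (List.cons_eq_cons.mp h).1.symm)

theorem card_filter_getLast?_cons (t : ColoredTree D) (i j : Fin D) :
    (t.verts.filter fun u => (i :: u).getLast? = some j).card =
      edgeCount j t + if i = j then 1 else 0 := by
  have hsplit : ∀ u : List (Fin D),
      (i :: u).getLast? = some j ↔ u.getLast? = some j ∨ (u = [] ∧ i = j) := by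
    rintro (_ | ⟨a, u⟩) <;> simp [List.getLast?_cons]
  rw [filter_congr fun u _ => hsplit u, filter_or, card_union_of_disjoint, edgeCount]
  · split_ifs with hij
    · have hroot : t.verts.filter (fun u => u = [] ∧ i = j) = {[]} := by
        ext u
        simp only [mem_filter, mem_singleton, hij, and_true]
        exact ⟨And.right, fun h => ⟨h ▸ t.root_mem, h⟩⟩
      rw [hroot, card_singleton]
    · simp [hij]
  · exact disjoint_filter.mpr fun u _ h₁ h₂ => by simp [h₂.1] at h₁

theorem edgeCount_graft (A : Finset (Fin D)) (g : A → ColoredTree D) (j : Fin D) :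
    edgeCount j (graft A g) = ∑ i : A, edgeCount j (g i) + if j ∈ A then 1 else 0 := by
  rw [edgeCount, card_filter_graft_verts _ _ _ (by simp)]
  simp only [card_filter_getLast?_cons, sum_add_distrib]
  rw [sum_coe_sort A fun i => if i = j then 1 else 0, sum_ite_eq']

theorem edgeCount_pos_of_mem_rootChildren {t : ColoredTree D} {i : Fin D}
    (hi : i ∈ t.rootChildren) : 0 < edgeCount i t :=
  card_pos.mpr ⟨[i], mem_filter.mpr ⟨mem_rootChildren.mp hi, rfl⟩⟩

end ColoredTree

section DecrementOn

variable {ι : Type*} [Fintype ι]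

theorem Nat.choose_sub_one_add_choose {M q : ℕ} (hq : q ≠ 0) :
    M.choose (q - 1) + M.choose q = (M + 1).choose q := by
  obtain ⟨q, rfl⟩ := Nat.exists_eq_succ_of_ne_zero hq
  exact (Nat.choose_succ_succ' M q).symm

theorem prod_choose_succ_eq_prod_support (p : ι → ℕ) (M : ℕ) :
    ∏ j, (M + 1).choose (p j) =
      ∏ j ∈ univ.filter (p · ≠ 0), (M.choose (p j - 1) + M.choose (p j)) := by
  rw [← prod_subset (subset_univ (univ.filter (p · ≠ 0))) fun j _ hj => by simp_all]
  exact prod_congr rfl fun j hj => (Nat.choose_sub_one_add_choose (mem_filter.mp hj).2).symm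

variable [DecidableEq ι]

def decrementOn (A : Finset ι) (p : ι → ℕ) (j : ι) : ℕ :=
  if j ∈ A then p j - 1 else p j

theorem eq_decrementOn_iff {A : Finset ι} {p : ι → ℕ} (hA : A ⊆ univ.filter (p · ≠ 0)) {q : ι → ℕ} :
    q = decrementOn A p ↔ ∀ j, q j + (if j ∈ A then 1 else 0) = p j := by
  have hp : ∀ j ∈ A, p j ≠ 0 := fun j hj => (mem_filter.mp (hA hj)).2
  refine ⟨?_, fun h => funext fun j => ?_⟩
  · rintro rfl j
    unfold decrementOn
    split_ifs with hj
    · have := hp j hj; omega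
    · rfl
  · have := h j
    unfold decrementOn
    split_ifs at * <;> omega

theorem sum_decrementOn_add_card {A : Finset ι} {p : ι → ℕ} (hA : A ⊆ univ.filter (p · ≠ 0)) :
    ∑ j, decrementOn A p j + A.card = ∑ j, p j := by
  have := (eq_decrementOn_iff hA).1 rfl
  rw [← sum_congr rfl fun j _ => this j, sum_add_distrib, sum_boole]
  simp

theorem prod_choose_decrementOn {A : Finset ι} {p : ι → ℕ} (hA : A ⊆ univ.filter (p · ≠ 0))
    (M : ℕ) :
    ∏ j, (M.choose (decrementOn A p j)) =
      (∏ j ∈ A, M.choose (p j - 1)) * ∏ j ∈ univ.filter (p · ≠ 0) \ A, M.choose (p j) := by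
  rw [← prod_subset (subset_univ (univ.filter (p · ≠ 0))), ← prod_sdiff hA, mul_comm]
  · congr 1 <;> refine prod_congr rfl fun j hj => ?_
    · simp [decrementOn, hj]
    · simp [decrementOn, (mem_sdiff.mp hj).2]
  · intro j _ hj
    simp_all [decrementOn]

theorem sum_powerset_prod_choose_decrementOn (p : ι → ℕ) (M : ℕ) :
    ∑ A ∈ (univ.filter (p · ≠ 0)).powerset, ∏ j, M.choose (decrementOn A p j) =
      ∏ j, (M + 1).choose (p j) := by
  rw [prod_choose_succ_eq_prod_support, prod_add]
  exact sum_congr rfl fun A hA => prod_choose_decrementOn (mem_powerset.mp hA) M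

theorem succ_mul_sum_powerset_card_mul_prod_choose_decrementOn (p : ι → ℕ) (M : ℕ) :
    (M + 1) * ∑ A ∈ (univ.filter (p · ≠ 0)).powerset,
        A.card * ∏ j, M.choose (decrementOn A p j) =
      (∑ j, p j) * ∏ j, (M + 1).choose (p j) := by
  have hc : ∀ j ∈ univ.filter (p · ≠ 0),
      (M + 1) * M.choose (p j - 1) = p j * (M.choose (p j - 1) + M.choose (p j)) := fun j hj => by
    obtain ⟨q, hq⟩ := Nat.exists_eq_add_one_of_ne_zero (mem_filter.mp hj).2
    rw [Nat.choose_sub_one_add_choose (mem_filter.mp hj).2, hq, Nat.add_sub_cancel,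
      Nat.add_one_mul_choose_eq, mul_comm]
  have key := (univ.filter (p · ≠ 0)).mul_sum_powerset_card_mul_prod_add hc
  rw [sum_filter_ne_zero] at key
  rw [prod_choose_succ_eq_prod_support, ← key]
  simp only [Nat.cast_id]
  congr 1
  exact sum_congr rfl fun A hA => by rw [prod_choose_decrementOn (mem_powerset.mp hA)]

end DecrementOn

namespace ColoredTree

variable {D : ℕ} {ι κ : Type*}

theorem elim_graft_subtree {A : Finset (Fin D)} {f : Option ι → ColoredTree D}
    (h : (f none).rootChildren = A) :
    Option.elim' (graft A fun i => (f none).subtree i) (f ∘ some) = f := by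
  funext x
  cases x
  · exact graft_subtree h
  · rfl

variable [Fintype ι] [Fintype κ]

def profile (f : ι → ColoredTree D) (j : Fin D) : ℕ :=
  ∑ x, edgeCount j (f x)

def forestsCongr (e : ι ≃ κ) (p : Fin D → ℕ) :
    {f : ι → ColoredTree D // profile f = p} ≃ {f : κ → ColoredTree D // profile f = p} :=
  (e.arrowCongr (Equiv.refl _)).subtypeEquiv fun f => by
    have : profile (e.arrowCongr (Equiv.refl _) f) = profile f :=
      funext fun j => e.symm.sum_comp fun x => edgeCount j (f x)
    rw [this]

theorem profile_elim_graft (A : Finset (Fin D)) (g : A ⊕ ι → ColoredTree D) (j : Fin D) :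
    profile (Option.elim' (graft A (g ∘ Sum.inl)) (g ∘ Sum.inr)) j =
      profile g j + if j ∈ A then 1 else 0 := by
  simp only [profile, Fintype.sum_option, Option.elim', edgeCount_graft, Fintype.sum_sum_type,
    Function.comp_apply]
  ring

noncomputable def rootFiberEquiv {p : Fin D → ℕ} {A : Finset (Fin D)}
    (hA : A ⊆ univ.filter (p · ≠ 0)) :
    {f : {f : Option ι → ColoredTree D // profile f = p} // (f.1 none).rootChildren = A} ≃
      {g : A ⊕ ι → ColoredTree D // profile g = decrementOn A p} where
  toFun f := ⟨Sum.elim (fun i => (f.1.1 none).subtree i) (f.1.1 ∘ some),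
    (eq_decrementOn_iff hA).2 fun j => by
      rw [← profile_elim_graft, Sum.elim_comp_inl, Sum.elim_comp_inr, elim_graft_subtree f.2, f.1.2]⟩
  invFun g := ⟨⟨Option.elim' (graft A (g.1 ∘ Sum.inl)) (g.1 ∘ Sum.inr),
    funext fun j => by rw [profile_elim_graft, (eq_decrementOn_iff hA).1 g.2 j]⟩,
    rootChildren_graft _ _⟩
  left_inv f := Subtype.ext (Subtype.ext (elim_graft_subtree f.2))
  right_inv g := Subtype.ext (funext fun x => by cases x <;> simp [subtree_graft])

theorem rootChildren_subset_support {p : Fin D → ℕ}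
    (f : {f : Option ι → ColoredTree D // profile f = p}) :
    (f.1 none).rootChildren ⊆ univ.filter (p · ≠ 0) := fun i hi => by
  have : edgeCount i (f.1 none) ≤ profile f.1 i :=
    single_le_sum (f := fun x => edgeCount i (f.1 x)) (fun _ _ => Nat.zero_le _) (mem_univ none)
  rw [mem_filter, ← f.2]
  exact ⟨mem_univ i, ((edgeCount_pos_of_mem_rootChildren hi).trans_le this).ne'⟩

noncomputable def forestsOptionEquiv (p : Fin D → ℕ) :
    {f : Option ι → ColoredTree D // profile f = p} ≃
      Σ A : {A // A ⊆ univ.filter (p · ≠ 0)},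
        {g : A.1 ⊕ ι → ColoredTree D // profile g = decrementOn A.1 p} :=
  (Equiv.sigmaSubtypeFiberEquiv _ _ rootChildren_subset_support).symm.trans
    (Equiv.sigmaCongrRight fun A => rootFiberEquiv A.2)

noncomputable def forestsSuccEquiv (k : ℕ) (p : Fin D → ℕ) :
    {f : Fin (k + 1) → ColoredTree D // profile f = p} ≃
      Σ A : {A // A ⊆ univ.filter (p · ≠ 0)},
        {g : Fin (A.1.card + k) → ColoredTree D // profile g = decrementOn A.1 p} :=
  (forestsCongr (finSuccEquiv k) p).trans <| (forestsOptionEquiv p).trans <|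
    Equiv.sigmaCongrRight fun A =>
      forestsCongr ((A.1.equivFin.sumCongr (Equiv.refl _)).trans finSumFinEquiv) _

theorem finite_forests (k : ℕ) (p : Fin D → ℕ) :
    Finite {f : Fin k → ColoredTree D // profile f = p} := by
  induction h : ∑ j, p j + k using Nat.strong_induction_on generalizing k p with
  | _ N ih =>
  cases k with
  | zero => infer_instance
  | succ k =>
    have (A : {A // A ⊆ univ.filter (p · ≠ 0)}) :
        Finite {g : Fin (A.1.card + k) → ColoredTree D // profile g = decrementOn A.1 p} :=
      ih _ (by have := sum_decrementOn_add_card A.2; omega) _ _ rfl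
    exact Finite.of_equiv _ (forestsSuccEquiv k p).symm

end ColoredTree

open ColoredTree

noncomputable def forestCount (D k : ℕ) (p : Fin D → ℕ) : ℕ :=
  Nat.card {f : Fin k → ColoredTree D // profile f = p}

theorem forestCount_zero {D : ℕ} (p : Fin D → ℕ) : forestCount D 0 p = if p = 0 then 1 else 0 := by
  have hprofile (f : Fin 0 → ColoredTree D) : profile f = 0 := funext fun j => by simp [profile]
  split_ifs with hp
  · simp [forestCount, hprofile, hp]
  · simp [forestCount, hprofile, Ne.symm hp]

theorem forestCount_succ {D : ℕ} (k : ℕ) (p : Fin D → ℕ) :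
    forestCount D (k + 1) p =
      ∑ A ∈ (univ.filter (p · ≠ 0)).powerset, forestCount D (A.card + k) (decrementOn A p) := by
  have (A : {A // A ⊆ univ.filter (p · ≠ 0)}) := finite_forests (A.1.card + k) (decrementOn A.1 p)
  rw [forestCount, Nat.card_congr (forestsSuccEquiv k p), Nat.card_sigma,
    sum_subtype _ fun A => mem_powerset]
  rfl

theorem forestCount_mul {D : ℕ} (k : ℕ) (p : Fin D → ℕ) :
    (∑ j, p j + k) * forestCount D k p = k * ∏ j, (∑ j, p j + k).choose (p j) := by
  induction h : ∑ j, p j + k using Nat.strong_induction_on generalizing k p with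
  | _ N ih =>
  subst h
  cases k with
  | zero =>
    rw [forestCount_zero]
    split_ifs with hp <;> simp [hp]
  | succ k =>
    set M := ∑ j, p j + k
    rcases Nat.eq_zero_or_pos M with hM | hM
    · obtain ⟨hp, rfl⟩ : (∑ j, p j) = 0 ∧ k = 0 := by omega
      obtain rfl : p = 0 := funext fun j => (sum_eq_zero_iff.mp hp) j (mem_univ j)
      have : decrementOn ∅ (0 : Fin D → ℕ) = 0 := funext fun j => by simp [decrementOn]
      simp [forestCount_succ, forestCount_zero, this]
    have hIH : ∀ A ∈ (univ.filter (p · ≠ 0)).powerset,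
        M * forestCount D (A.card + k) (decrementOn A p) =
          (A.card + k) * ∏ j, M.choose (decrementOn A p j) := fun A hA => by
      have hsum : ∑ j, decrementOn A p j + (A.card + k) = M := by
        have := sum_decrementOn_add_card (mem_powerset.mp hA); omega
      rw [← hsum]
      exact ih _ (by omega) _ _ rfl
    apply Nat.eq_of_mul_eq_mul_left hM
    calc M * ((∑ j, p j + (k + 1)) * forestCount D (k + 1) p)
        = (M + 1) * ∑ A ∈ (univ.filter (p · ≠ 0)).powerset,
            M * forestCount D (A.card + k) (decrementOn A p) := by
          rw [forestCount_succ, ← mul_sum]; ring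
      _ = (M + 1) * ∑ A ∈ (univ.filter (p · ≠ 0)).powerset,
              A.card * ∏ j, M.choose (decrementOn A p j) +
            k * ((M + 1) * ∑ A ∈ (univ.filter (p · ≠ 0)).powerset,
              ∏ j, M.choose (decrementOn A p j)) := by
          rw [sum_congr rfl hIH, mul_sum, mul_sum, mul_sum, mul_sum, ← sum_add_distrib]
          exact sum_congr rfl fun A _ => by ring
      _ = M * ((k + 1) * ∏ j, (∑ j, p j + (k + 1)).choose (p j)) := by
          rw [succ_mul_sum_powerset_card_mul_prod_choose_decrementOn,
            sum_powerset_prod_choose_decrementOn, show ∑ j, p j + (k + 1) = M + 1 by omega]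
          simp only [M]
          ring

theorem count_line_colored_trees_general (D : ℕ) (p : Fin D → ℕ) :
    {t : ColoredTree D | ∀ i, edgeCount i t = p i}.Finite ∧
    (∑ i, p i + 1) * Nat.card {t : ColoredTree D // ∀ i, edgeCount i t = p i} =
      ∏ j, Nat.choose (∑ i, p i + 1) (p j) := by
  have e : {t : ColoredTree D // ∀ i, edgeCount i t = p i} ≃
      {f : Fin 1 → ColoredTree D // profile f = p} :=
    (Equiv.funUnique (Fin 1) _).symm.subtypeEquiv fun t => by simp [profile, funext_iff]
  have := finite_forests 1 p
  refine ⟨Set.finite_coe_iff.mp (Finite.of_equiv _ e.symm), ?_⟩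
  rw [Nat.card_congr e, ← forestCount]
  simpa using forestCount_mul 1 p

theorem count_line_colored_trees (D : ℕ) (hD : 2 ≤ D) (p : Fin D → ℕ) :
    {t : ColoredTree D | ∀ i, edgeCount i t = p i}.Finite ∧
    (∑ i, p i + 1) * Nat.card {t : ColoredTree D // ∀ i, edgeCount i t = p i} =
      ∏ j, Nat.choose (∑ i, p i + 1) (p j) :=
  count_line_colored_trees_general D p
end

section
/- For every integer D ≥ 2, every integer n ≥ 0, and all integers p_1, …, p_D ≥ 1, the rational numbers C^n satisfy the linear recursion C^{n+1}_{p_1,…,p_D} = C^{n}_{p_1,…,p_D} + ∑_{k=1}^{D} ∑_{1 ≤ i_1 < ⋯ < i_k ≤ D} C^{n+k}_{p_1, …, p_{i_1}−1, …, p_{i_k}−1, …, p_D}. -/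
open Finset

/-- The rational numbers `Cⁿ_{p₁…p_D}`: for `n ≥ 1` this is
`(n/(p₁+⋯+p_D+n)) · ∏_j binom(p₁+⋯+p_D+n, p_j)`; for `n = 0` it is `1` if all
`p_i = 0` and `0` otherwise. -/
def Ccoef (D n : ℕ) (p : Fin D → ℕ) : ℚ :=
  if n = 0 then (if ∀ i, p i = 0 then 1 else 0)
  else (n : ℚ) / ((∑ i, p i : ℕ) + n) * ∏ j, ((∑ i, p i + n).choose (p j) : ℚ)

/-!
Put `N = p₁ + ⋯ + p_D + n`. For `S ⊆ {1, …, D}` the entries of `p - 1_S` add up with `n + |S|`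
to `N`, so the right-hand side is `∑_S (n + |S|)/N · w(S)` with
`w(S) = ∏_{j ∈ S} binom(N, p_j - 1) · ∏_{j ∉ S} binom(N, p_j)` (the term `S = ∅` at `n = 0`
vanishes on both readings because `p ≠ 0`). By Pascal's rule `∑_S w(S) = ∏_j binom(N + 1, p_j)`.
Counting `|S|` as the number of `i ∈ S`, the sets containing `i` contribute
`binom(N, p_i - 1) ∏_{j ≠ i} binom(N + 1, p_j)`, and `(N + 1) binom(N, p_i - 1) = p_i binom(N + 1, p_i)`,
so `(N + 1) ∑_S |S| w(S) = (∑_j p_j) ∏_j binom(N + 1, p_j)`. Together these turn the right-hand side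
into `(n + 1)/(N + 1) ∏_j binom(N + 1, p_j)`, which is the left-hand side.
-/

namespace Finset

variable {α M R : Type*}

theorem sum_powerset_eq_add_sum_Icc_powersetCard [AddCommMonoid M] (s : Finset α)
    (f : ℕ → Finset α → M) :
    ∑ t ∈ s.powerset, f #t t = f 0 ∅ + ∑ k ∈ Icc 1 #s, ∑ t ∈ powersetCard k s, f k t := by
  rw [sum_powerset, range_eq_Ico, sum_eq_sum_Ico_succ_bot (Nat.succ_pos _), powersetCard_zero,
    sum_singleton, card_empty]
  refine congrArg _ (sum_congr rfl fun k _ => sum_congr rfl fun t ht => ?_)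
  rw [(mem_powersetCard.mp ht).2]

variable [CommSemiring R] [DecidableEq α]

theorem sum_powerset_filter_mem_prod_mul_prod {s : Finset α} {i : α} (hi : i ∈ s) (f g : α → R) :
    ∑ t ∈ s.powerset with i ∈ t, (∏ j ∈ t, f j) * ∏ j ∈ s \ t, g j =
      f i * ∏ j ∈ s.erase i, (f j + g j) := by
  symm
  -- Replacing `g i` by `0` kills exactly the subsets that do not contain `i`.
  calc f i * ∏ j ∈ s.erase i, (f j + g j)
      = ∏ j ∈ s, (f j + Function.update g i 0 j) := by
        rw [← mul_prod_erase s _ hi, Function.update_self, add_zero]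
        exact congrArg _ (prod_congr rfl fun j hj => by
          rw [Function.update_of_ne (ne_of_mem_erase hj)])
    _ = ∑ t ∈ s.powerset, (∏ j ∈ t, f j) * ∏ j ∈ s \ t, Function.update g i 0 j := prod_add _ _ _
    _ = _ := by
        rw [sum_filter]
        refine sum_congr rfl fun t _ => ?_
        split_ifs with hit
        · exact congrArg _ (prod_congr rfl fun j hj =>
            Function.update_of_ne (by rintro rfl; exact (mem_sdiff.mp hj).2 hit) _ _)
        · exact mul_eq_zero_of_right _
            (prod_eq_zero (mem_sdiff.mpr ⟨hi, hit⟩) (Function.update_self ..))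

theorem sum_powerset_card_mul_prod_mul_prod (s : Finset α) (f g : α → R) :
    ∑ t ∈ s.powerset, (#t : R) * ((∏ j ∈ t, f j) * ∏ j ∈ s \ t, g j) =
      ∑ i ∈ s, f i * ∏ j ∈ s.erase i, (f j + g j) := by
  simp_rw [card_eq_sum_ones, Nat.cast_sum, Nat.cast_one, sum_mul, one_mul]
  rw [sum_comm' (s' := fun i => {t ∈ s.powerset | i ∈ t}) (t' := s) (by
    intro t i
    simp only [mem_filter, mem_powerset]
    grind)]
  exact sum_congr rfl fun i hi => sum_powerset_filter_mem_prod_mul_prod hi f g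

end Finset

section PascalTerm

variable {ι : Type*} [Fintype ι] [DecidableEq ι]

def pascalTerm (N : ℕ) (q : ι → ℕ) (t : Finset ι) : ℕ :=
  (∏ i ∈ t, N.choose (q i - 1)) * ∏ i ∈ univ \ t, N.choose (q i)

variable {q : ι → ℕ}

theorem prod_choose_succ_eq_sum_pascalTerm (hq : ∀ i, 1 ≤ q i) (N : ℕ) :
    ∏ i, (N + 1).choose (q i) = ∑ t ∈ univ.powerset, pascalTerm N q t := by
  unfold pascalTerm
  rw [← prod_add]
  exact prod_congr rfl fun i _ => Nat.choose_succ_left _ _ (hq i)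

theorem succ_mul_sum_card_mul_pascalTerm (hq : ∀ i, 1 ≤ q i) (N : ℕ) :
    (N + 1) * ∑ t ∈ univ.powerset, #t * pascalTerm N q t =
      (∑ i, q i) * ∏ i, (N + 1).choose (q i) := by
  have hexpand := sum_powerset_card_mul_prod_mul_prod univ (fun i => N.choose (q i - 1))
    (fun i => N.choose (q i))
  simp only [Nat.cast_id, ← Nat.choose_succ_left _ _ (hq _)] at hexpand
  unfold pascalTerm
  rw [hexpand, mul_sum, sum_mul]
  refine sum_congr rfl fun i _ => ?_
  rw [← mul_assoc, Nat.add_one_mul_choose_eq, Nat.sub_add_cancel (hq i), mul_comm _ (q i),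
    mul_assoc, mul_prod_erase _ (fun j => (N + 1).choose (q j)) (mem_univ i)]

end PascalTerm

section Ccoef

variable {D : ℕ}

theorem Ccoef_eq_div_mul_prod {m : ℕ} {q : Fin D → ℕ} (h : m ≠ 0 ∨ ∃ i, q i ≠ 0) :
    Ccoef D m q = m / ((∑ i, q i : ℕ) + m) * ∏ j, ((∑ i, q i + m).choose (q j) : ℚ) := by
  unfold Ccoef
  split_ifs with hm hq
  · obtain ⟨i, hi⟩ := h.resolve_left (not_not.mpr hm)
    exact absurd (hq i) hi
  · simp [hm]
  · rfl

theorem Ccoef_succ (p : Fin D → ℕ) (n : ℕ) :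
    Ccoef D (n + 1) p =
      (n + 1) / (∑ i, p i + n + 1 : ℕ) * (∏ i, (∑ i, p i + n + 1).choose (p i) : ℕ) := by
  rw [Ccoef_eq_div_mul_prod (.inl (Nat.add_one_ne_zero n))]
  simp only [add_assoc]
  push_cast
  ring

theorem Ccoef_add_card_sub_indicator (hD : 0 < D) {p : Fin D → ℕ} (hp : ∀ i, 1 ≤ p i) (n : ℕ)
    (t : Finset (Fin D)) :
    Ccoef D (n + #t) (fun i => p i - if i ∈ t then 1 else 0) =
      (n + #t) / (∑ i, p i + n : ℕ) * pascalTerm (∑ i, p i + n) p t := by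
  have hsum : ∑ i, (p i - if i ∈ t then 1 else 0) + (n + #t) = ∑ i, p i + n := by
    have hcard : ∑ i, (if i ∈ t then 1 else 0) = #t := by simp
    rw [← hcard, ← add_assoc, add_right_comm, ← sum_add_distrib]
    congr 2 with i
    have := hp i
    split_ifs <;> omega
  have hne : n + #t ≠ 0 ∨ ∃ i, p i - (if i ∈ t then 1 else 0) ≠ 0 := by
    refine (em (n + #t = 0)).symm.imp id fun h => ⟨⟨0, hD⟩, ?_⟩
    have := hp ⟨0, hD⟩
    simp only [card_eq_zero.mp (by omega : #t = 0), notMem_empty, if_false, tsub_zero]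
    omega
  rw [Ccoef_eq_div_mul_prod hne, ← Nat.cast_add, hsum, ← Nat.cast_prod, pascalTerm,
    ← prod_sdiff (subset_univ t), mul_comm (∏ i ∈ t, _)]
  push_cast
  congr 2 <;> refine prod_congr rfl fun i hi => ?_ <;> simp_all

end Ccoef

theorem Ccoef_linear_recursion (D : ℕ) (hD : 2 ≤ D) (n : ℕ) (p : Fin D → ℕ)
    (hp : ∀ i, 1 ≤ p i) :
    Ccoef D (n + 1) p =
      Ccoef D n p +
        ∑ k ∈ Finset.Icc 1 D,
          ∑ S ∈ Finset.powersetCard k (Finset.univ : Finset (Fin D)),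
            Ccoef D (n + k) (fun i => p i - if i ∈ S then 1 else 0) := by
  have hD0 : 0 < D := by omega
  have hsplit := sum_powerset_eq_add_sum_Icc_powersetCard univ
    (fun k t => Ccoef D (n + k) (fun i => p i - if i ∈ t then 1 else 0))
  simp only [card_univ, Fintype.card_fin, add_zero, notMem_empty, if_false, tsub_zero] at hsplit
  rw [← hsplit, sum_congr rfl fun t _ => Ccoef_add_card_sub_indicator hD0 hp n t, Ccoef_succ]
  have hP : 0 < ∑ i, p i := sum_pos (fun i _ => hp i) ⟨⟨0, hD0⟩, mem_univ _⟩
  set N := ∑ i, p i + n with hNdef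
  have hweight := succ_mul_sum_card_mul_pascalTerm hp N
  rw [prod_choose_succ_eq_sum_pascalTerm hp] at hweight ⊢
  have hNQ : (N : ℚ) ≠ 0 := by positivity
  replace hweight := congrArg (Nat.cast (R := ℚ)) hweight
  replace hNdef := congrArg (Nat.cast (R := ℚ)) hNdef
  push_cast at hweight hNdef ⊢
  simp only [div_mul_eq_mul_div, ← sum_div, add_mul, sum_add_distrib, ← mul_sum]
  field_simp
  linear_combination -hweight + (∑ t ∈ univ.powerset, (pascalTerm N p t : ℚ)) * hNdef
end

section
/- For every integer D ≥ 2 and every integer P ≥ 1, the sum of C^1_{p_1…p_D} over all tuples (p_1, …, p_D) of natural numbers with p_1 + ⋯ + p_D = P − 1 equals (1/P) · binom(D(P−1)+D, P−1), which in turn equals the D-Catalan number (1/(DP+1)) · binom(DP+1, P). -/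
/-!
Since `p₁ + ⋯ + p_D = P - 1` on the summation range, every term `C¹_p` is
`(1/P) ∏ⱼ binom(P, pⱼ)`, and the multivariate Vandermonde identity sums these products to
`binom(DP, P - 1)`. The second equality is `P · binom(DP + 1, P) = (DP + 1) · binom(DP, P - 1)`.
-/

/-- The rational number `C¹_{p₁…p_D} = (1/(p₁+⋯+p_D+1)) · ∏_j binom(p₁+⋯+p_D+1, p_j)`. -/
def C1 (D : ℕ) (p : Fin D → ℕ) : ℚ :=
  (1 : ℚ) / ((∑ i, p i : ℕ) + 1) * ∏ j, ((∑ i, p i + 1).choose (p j) : ℚ)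

open Finset

theorem Finset.sum_piAntidiag_prod_choose {ι : Type*} [DecidableEq ι] (s : Finset ι)
    (n : ι → ℕ) (k : ℕ) :
    ∑ f ∈ s.piAntidiag k, ∏ i ∈ s, (n i).choose (f i) = (∑ i ∈ s, n i).choose k := by
  induction s using Finset.cons_induction generalizing k with
  | empty => cases k <;> simp
  | cons a s has ih =>
    rw [piAntidiag_cons, sum_disjiUnion, sum_cons, Nat.add_choose_eq]
    refine sum_congr rfl fun p _ => ?_
    rw [sum_map, ← ih, mul_sum]
    refine sum_congr rfl fun f hf => ?_
    have hfa : f a = 0 := by_contra fun h => has ((mem_piAntidiag.1 hf).2 a h)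
    rw [prod_cons]
    congr 1
    · simp [hfa]
    · refine prod_congr rfl fun i hi => ?_
      have hia : i ≠ a := fun h => has (h ▸ hi)
      simp [hia]

theorem Nat.cast_choose_div_succ {K : Type*} [Field K] [CharZero K] (m k : ℕ) :
    (m.choose k : K) / (k + 1) = ((m + 1).choose (k + 1) : K) / (m + 1) := by
  rw [div_eq_div_iff (Nat.cast_add_one_ne_zero k) (Nat.cast_add_one_ne_zero m), mul_comm]
  exact_mod_cast (Nat.add_one_mul_choose_eq m k)

theorem sum_C1_antidiagonalTuple (D Q : ℕ) :
    ∑ p ∈ Nat.antidiagonalTuple D Q, C1 D p = ((D * (Q + 1)).choose Q : ℚ) / (Q + 1) := by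
  have hC1 : ∀ p ∈ Nat.antidiagonalTuple D Q,
      C1 D p = (∏ j, ((Q + 1).choose (p j) : ℚ)) / (Q + 1) := fun p hp => by
    rw [C1, Nat.mem_antidiagonalTuple.1 hp, one_div_mul_eq_div]
  have hVandermonde : ∑ p ∈ Nat.antidiagonalTuple D Q, ∏ j, (Q + 1).choose (p j) =
      (D * (Q + 1)).choose Q := by
    rw [← piAntidiag_univ_fin_eq_antidiagonalTuple, sum_piAntidiag_prod_choose, sum_const,
      card_univ, Fintype.card_fin, smul_eq_mul]
  rw [sum_congr rfl hC1, ← sum_div, ← hVandermonde]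
  push_cast
  rfl

theorem sum_C1_eq_DCatalan_general (D : ℕ) (P : ℕ) (hP : 1 ≤ P) :
    (∑ p ∈ Finset.Nat.antidiagonalTuple D (P - 1), C1 D p =
      (1 / P : ℚ) * ((D * (P - 1) + D).choose (P - 1) : ℚ)) ∧
    ((1 / P : ℚ) * ((D * (P - 1) + D).choose (P - 1) : ℚ) =
      (1 / (D * P + 1) : ℚ) * ((D * P + 1).choose P : ℚ)) := by
  obtain ⟨Q, rfl⟩ : ∃ Q, P = Q + 1 := ⟨P - 1, by omega⟩
  rw [Nat.add_sub_cancel, ← Nat.mul_succ, one_div_mul_eq_div, one_div_mul_eq_div]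
  push_cast
  exact ⟨sum_C1_antidiagonalTuple D Q, by exact_mod_cast Nat.cast_choose_div_succ (D * (Q + 1)) Q⟩

theorem sum_C1_eq_DCatalan (D : ℕ) (hD : 2 ≤ D) (P : ℕ) (hP : 1 ≤ P) :
    (∑ p ∈ Finset.Nat.antidiagonalTuple D (P - 1), C1 D p =
      (1 / P : ℚ) * ((D * (P - 1) + D).choose (P - 1) : ℚ)) ∧
    ((1 / P : ℚ) * ((D * (P - 1) + D).choose (P - 1) : ℚ) =
      (1 / (D * P + 1) : ℚ) * ((D * P + 1).choose P : ℚ)) :=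
  sum_C1_eq_DCatalan_general D P hP
end

section
/- For every integer D ≥ 2 and every real R > 1, there exists ε_R > 0 such that for all complex numbers g_1, …, g_D with |g_i| < ε_R for each i, the complex polynomial Q(X) = −X + ∑_{k=0}^{D} (∑_{1 ≤ i_1 < ⋯ < i_k ≤ D} g_{i_1} ⋯ g_{i_k}) X^k has exactly one root of norm strictly less than R, counted with multiplicity (i.e., in the multiset of roots of Q, exactly one element has norm < R), and all other roots have norm ≥ R. -/
/-!
Write `Q = F - X` with `F(z) = ∏ᵢ (1 + gᵢ z)`. For small `g`, `F` is `K`-Lipschitz on the closed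
ball of radius `R` with `K < 1` and `1 + K R < R`, so it maps that ball into the open ball and
Banach's theorem gives exactly one fixed point `z₀` there, i.e. exactly one root of `Q` of norm
`< R` as a point. It is a simple root: at an interior point the derivative of a `K`-Lipschitz
function has norm at most `K < 1`, so `Q'(z₀) = F'(z₀) - 1 ≠ 0`.
-/

open Polynomial

/-- The polynomial `Q(X) = −X + ∑_{k=0}^{D} e_k(g₁,…,g_D) X^k` where `e_k` is the
`k`-th elementary symmetric polynomial (the `k = 0` term being `1`). -/
noncomputable def Q (D : ℕ) (g : Fin D → ℂ) : Polynomial ℂ :=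
  -X + ∑ k ∈ Finset.range (D + 1),
    C (∑ S ∈ Finset.powersetCard k (Finset.univ : Finset (Fin D)), ∏ i ∈ S, g i) * X ^ k

open Finset Metric Set Filter Topology NNReal

theorem norm_prod_sub_prod_le {ι R : Type*} [NormedCommRing R] [NormOneClass R]
    (s : Finset ι) {a b : ι → R} {M : ℝ} (hM : 1 ≤ M)
    (ha : ∀ i ∈ s, ‖a i‖ ≤ M) (hb : ∀ i ∈ s, ‖b i‖ ≤ M) :
    ‖∏ i ∈ s, a i - ∏ i ∈ s, b i‖ ≤ M ^ #s * ∑ i ∈ s, ‖a i - b i‖ := by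
  classical
  induction s using Finset.induction_on with
  | empty => simp
  | insert j s hj ih =>
    rw [Finset.forall_mem_insert] at ha hb
    have hprod_b : ‖∏ i ∈ s, b i‖ ≤ M ^ #s := (Finset.norm_prod_le _ _).trans <|
      (prod_le_prod (fun _ _ ↦ norm_nonneg _) hb.2).trans_eq (prod_const M)
    rw [prod_insert hj, prod_insert hj, sum_insert hj, card_insert_of_notMem hj]
    calc ‖a j * ∏ i ∈ s, a i - b j * ∏ i ∈ s, b i‖
        = ‖a j * (∏ i ∈ s, a i - ∏ i ∈ s, b i) + (a j - b j) * ∏ i ∈ s, b i‖ := by ring_nf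
      _ ≤ M * (M ^ #s * ∑ i ∈ s, ‖a i - b i‖) + ‖a j - b j‖ * M ^ #s := by
        refine (norm_add_le _ _).trans (add_le_add ?_ ?_) <;> refine (norm_mul_le _ _).trans ?_
        · exact mul_le_mul ha.1 (ih ha.2 hb.2) (norm_nonneg _) (zero_le_one.trans hM)
        · exact mul_le_mul_of_nonneg_left hprod_b (norm_nonneg _)
      _ ≤ M ^ (#s + 1) * (‖a j - b j‖ + ∑ i ∈ s, ‖a i - b i‖) := by
        have : 0 ≤ ‖a j - b j‖ * M ^ #s * (M - 1) :=
          mul_nonneg (mul_nonneg (norm_nonneg _) (by positivity)) (sub_nonneg.2 hM)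
        linear_combination this

theorem lipschitzOnWith_prod_one_add_mul {ι R : Type*} [NormedCommRing R] [NormOneClass R]
    (s : Finset ι) {g : ι → R} {ε r : ℝ} (hε : 0 ≤ ε) (hg : ∀ i, ‖g i‖ ≤ ε) :
    LipschitzOnWith (Real.toNNReal ((1 + ε * r) ^ #s * (#s * ε)))
      (fun z ↦ ∏ i ∈ s, (1 + g i * z)) (closedBall 0 r) := by
  refine LipschitzOnWith.of_dist_le' fun z hz w hw ↦ ?_
  rw [mem_closedBall_zero_iff] at hz hw
  have hfactor (z : R) (hz : ‖z‖ ≤ r) (i : ι) : ‖1 + g i * z‖ ≤ 1 + ε * r :=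
    (norm_add_le _ _).trans <| by
      rw [norm_one]
      gcongr
      exact (norm_mul_le _ _).trans (mul_le_mul (hg i) hz (norm_nonneg _) hε)
  have hdiff (i : ι) : ‖(1 + g i * z) - (1 + g i * w)‖ ≤ ε * ‖z - w‖ := by
    rw [add_sub_add_left_eq_sub, ← mul_sub]
    exact (norm_mul_le _ _).trans (mul_le_mul_of_nonneg_right (hg i) (norm_nonneg _))
  have hM : 1 ≤ 1 + ε * r := le_add_of_nonneg_right (mul_nonneg hε ((norm_nonneg _).trans hz))
  rw [dist_eq_norm, dist_eq_norm]
  calc ‖∏ i ∈ s, (1 + g i * z) - ∏ i ∈ s, (1 + g i * w)‖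
      ≤ (1 + ε * r) ^ #s * ∑ i ∈ s, ‖(1 + g i * z) - (1 + g i * w)‖ :=
        norm_prod_sub_prod_le s hM (fun i _ ↦ hfactor z hz i) (fun i _ ↦ hfactor w hw i)
    _ ≤ (1 + ε * r) ^ #s * (#s * ε * ‖z - w‖) := by
        gcongr
        simpa [mul_assoc] using sum_le_sum fun i (_ : i ∈ s) ↦ hdiff i
    _ = _ := by ring

theorem exists_fixedPoint_of_lipschitzOnWith_closedBall {E : Type*} [NormedAddCommGroup E]
    [CompleteSpace E] {f : E → E} {K : ℝ≥0} {R : ℝ}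
    (hf : LipschitzOnWith K f (closedBall 0 R)) (hK : K < 1) (hf0 : ‖f 0‖ + K * R < R) :
    ∃ z, ‖z‖ < R ∧ f z = z ∧ ∀ w, ‖w‖ ≤ R → f w = w → w = z := by
  have hR : 0 ≤ R := by nlinarith [norm_nonneg (f 0), (show (K : ℝ) < 1 from hK)]
  have hmaps : MapsTo f (closedBall 0 R) (ball 0 R) := fun z hz ↦ by
    rw [mem_ball_zero_iff]
    calc ‖f z‖ ≤ ‖f 0‖ + dist (f z) (f 0) :=
          dist_eq_norm (f z) (f 0) ▸ norm_le_norm_add_norm_sub' _ _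
      _ ≤ ‖f 0‖ + K * dist z 0 := by gcongr; exact hf.dist_le_mul z hz 0 (mem_closedBall_self hR)
      _ ≤ ‖f 0‖ + K * R := by gcongr; exact mem_closedBall.1 hz
      _ < R := hf0
  have hmaps' := hmaps.mono_right ball_subset_closedBall
  have hcontr : ContractingWith K (hmaps'.restrict f _ _) := ⟨hK, hf.mapsToRestrict hmaps'⟩
  obtain ⟨z, hz, hfix, -, -⟩ := hcontr.exists_fixedPoint' isClosed_closedBall.isComplete hmaps'
    (mem_closedBall_self hR) (edist_ne_top _ _)
  refine ⟨z, mem_ball_zero_iff.1 (hfix ▸ hmaps hz), hfix, fun w hw hfw ↦ ?_⟩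
  exact congrArg Subtype.val <| hcontr.fixedPoint_unique' (x := ⟨w, mem_closedBall_zero_iff.2 hw⟩)
    (y := ⟨z, hz⟩) (Subtype.ext hfw) (Subtype.ext hfix)

theorem rootMultiplicity_sub_X_eq_one_of_lipschitzOnWith {𝕜 : Type*} [NontriviallyNormedField 𝕜]
    {p : 𝕜[X]} {K : ℝ≥0} {s : Set 𝕜} {z : 𝕜} (hK : K < 1) (hs : s ∈ 𝓝 z)
    (hp : LipschitzOnWith K (fun w ↦ p.eval w) s) (hz : p.eval z = z) :
    (p - X).rootMultiplicity z = 1 := by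
  have hderiv : ¬(derivative (p - X)).IsRoot z := by
    rw [IsRoot, derivative_sub, derivative_X, eval_sub, eval_one, sub_eq_zero]
    intro h
    have := norm_deriv_le_of_lipschitzOn hs hp
    rw [Polynomial.deriv, h, norm_one] at this
    exact (this.trans_lt hK).false
  have hne : p - X ≠ 0 := fun h ↦ hderiv (by simp [h])
  have hpos := (rootMultiplicity_pos hne).2 (show (p - X).IsRoot z by simp [hz])
  have := (one_lt_rootMultiplicity_iff_isRoot hne).not.2 fun h ↦ hderiv h.2
  omega

theorem card_filter_roots_eq_one {R : Type*} [CommRing R] [IsDomain R] {p : R[X]}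
    {P : R → Prop} [DecidablePred P] {z : R} (hmult : p.rootMultiplicity z = 1) (hz : P z)
    (huniq : ∀ w, p.IsRoot w → P w → w = z) :
    (p.roots.filter P).card = 1 := by
  let _ := Classical.decEq R
  have hp : p ≠ 0 := by rintro rfl; simp at hmult
  have : p.roots.filter P = p.roots.filter (· = z) := Multiset.filter_congr fun w hw ↦
    ⟨huniq w ((mem_roots hp).1 hw), fun h ↦ h ▸ hz⟩
  rw [this, Multiset.filter_eq', Multiset.card_replicate, count_roots, hmult]

theorem card_filter_roots_sub_X_norm_lt_eq_one {𝕜 : Type*} [NontriviallyNormedField 𝕜]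
    [CompleteSpace 𝕜] {p : 𝕜[X]} {K : ℝ≥0} {R : ℝ}
    (hp : LipschitzOnWith K (fun z ↦ p.eval z) (closedBall 0 R)) (hK : K < 1)
    (hp0 : ‖p.eval 0‖ + K * R < R) :
    ((p - X).roots.filter fun z ↦ ‖z‖ < R).card = 1 := by
  obtain ⟨z, hzR, hfix, huniq⟩ := exists_fixedPoint_of_lipschitzOnWith_closedBall hp hK hp0
  refine card_filter_roots_eq_one ?_ hzR fun w hw hwR ↦ huniq w hwR.le ?_
  · exact rootMultiplicity_sub_X_eq_one_of_lipschitzOnWith hK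
      (closedBall_mem_nhds_of_mem (mem_ball_zero_iff.2 hzR)) hp hfix
  · simpa [sub_eq_zero] using hw

theorem Q_eq_prod_one_add_sub_X (D : ℕ) (g : Fin D → ℂ) :
    Q D g = ∏ i, (1 + C (g i) * X) - X := by
  rw [Q, prod_one_add, sum_powerset, card_univ, Fintype.card_fin, neg_add_eq_sub]
  congr 1
  refine sum_congr rfl fun k _ ↦ ?_
  rw [map_sum, sum_mul]
  refine sum_congr rfl fun S hS ↦ ?_
  rw [prod_mul_distrib, prod_const, (mem_powersetCard.1 hS).2, map_prod]

theorem Q_has_unique_small_root_general (D : ℕ) (R : ℝ) (hR : 1 < R) :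
    ∃ εR > 0, ∀ g : Fin D → ℂ, (∀ i, ‖g i‖ < εR) →
      ((Q D g).roots.filter fun z => ‖z‖ < R).card = 1 := by
  set K : ℝ := (R - 1) / (2 * R) with hK
  have hK0 : 0 < K := div_pos (by linarith) (by linarith)
  have hL : Tendsto (fun ε : ℝ ↦ (1 + ε * R) ^ D * (D * ε)) (𝓝[>] 0) (𝓝 0) := by
    have hcont : Continuous fun ε : ℝ ↦ (1 + ε * R) ^ D * (D * ε) := by fun_prop
    simpa using (hcont.tendsto 0).mono_left nhdsWithin_le_nhds
  obtain ⟨ε, hLε, hε⟩ := ((hL.eventually (gt_mem_nhds hK0)).and self_mem_nhdsWithin).exists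
  refine ⟨ε, hε, fun g hg ↦ ?_⟩
  have heval : (fun z ↦ (∏ i, (1 + C (g i) * X)).eval z) = fun z ↦ ∏ i, (1 + g i * z) := by
    ext z
    simp [eval_prod]
  rw [Q_eq_prod_one_add_sub_X]
  refine card_filter_roots_sub_X_norm_lt_eq_one (K := K.toNNReal) ?_ ?_ ?_
  · rw [heval]
    refine (lipschitzOnWith_prod_one_add_mul univ hε.le fun i ↦ (hg i).le).weaken ?_
    rw [card_fin]
    exact Real.toNNReal_le_toNNReal hLε.le
  · rw [Real.toNNReal_lt_one, hK, div_lt_one (by linarith)]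
    linarith
  · rw [congrFun heval 0, Real.coe_toNNReal _ hK0.le, hK]
    simp only [mul_zero, add_zero, prod_const_one, norm_one]
    field_simp
    linarith

/-- For small enough `g`, exactly one root of `Q` (in the multiset of roots, i.e.
counted with multiplicity) has norm `< R`; equivalently all the other roots have
norm `≥ R`. -/
theorem Q_has_unique_small_root (D : ℕ) (hD : 2 ≤ D) (R : ℝ) (hR : 1 < R) :
    ∃ εR > 0, ∀ g : Fin D → ℂ, (∀ i, ‖g i‖ < εR) →
      ((Q D g).roots.filter fun z => ‖z‖ < R).card = 1 :=
  Q_has_unique_small_root_general D R hR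
end
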